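/- arXiv:2106.07375 — 5 statements merged into one kernel-verified Lean document; each statement's English description precedes it below -/
import Mathlib

section
/- For every positive integer N, the infinite product ∏_{k=0}^∞ Z(s+kN), with Z(s) = (s-2)(s-3)/((s-1)(s-4)), converges to Γ((s-1)/N)Γ((s-4)/N)/(Γ((s-2)/N)Γ((s-3)/N)) for complex s avoiding poles of the factors. -/
/-!
With `a = (s-1)/N`, `b = (s-4)/N`, `c = (s-2)/N`, `d = (s-3)/N` the factor `Z(s+kN)` becomes
`(c+k)(d+k)/((a+k)(b+k))`, and `a + b = c + d`. In Euler's limit `Γ(z) = lim nᶻ n! / ∏_{j≤n} (z+j)`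
the powers `nᵃ nᵇ` and `nᶜ nᵈ` therefore cancel in the ratio, leaving exactly the partial product.
-/

open Filter Finset Complex Topology

namespace Complex

lemma GammaSeq_mul_div_GammaSeq_mul {a b c d : ℂ} (habcd : a + b = c + d) {n : ℕ} (hn : n ≠ 0) :
    GammaSeq a n * GammaSeq b n / (GammaSeq c n * GammaSeq d n) =
      ∏ k ∈ range (n + 1), (c + k) * (d + k) / ((a + k) * (b + k)) := by
  have hn' : (n : ℂ) ≠ 0 := Nat.cast_ne_zero.mpr hn
  have hpow : (n : ℂ) ^ a * n ^ b = n ^ c * n ^ d := by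
    rw [← cpow_add _ _ hn', ← cpow_add _ _ hn', habcd]
  have hne : (n : ℂ) ^ c * n ^ d * n.factorial * n.factorial ≠ 0 := by
    simp [hn', n.factorial_ne_zero]
  simp only [GammaSeq, prod_div_distrib, prod_mul_distrib]
  calc _ = ((∏ k ∈ range (n + 1), (c + k)) * ∏ k ∈ range (n + 1), (d + k)) *
        ((n : ℂ) ^ a * n ^ b * n.factorial * n.factorial) /
        (((∏ k ∈ range (n + 1), (a + k)) * ∏ k ∈ range (n + 1), (b + k)) *
        ((n : ℂ) ^ c * n ^ d * n.factorial * n.factorial)) := by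
        simp only [div_eq_mul_inv, mul_inv, inv_inv]; ring
    _ = _ := by rw [hpow, mul_div_mul_right _ _ hne]

theorem tendsto_prod_div_Gamma {a b c d : ℂ} (habcd : a + b = c + d)
    (hc : ∀ m : ℕ, c ≠ -m) (hd : ∀ m : ℕ, d ≠ -m) :
    Tendsto (fun n : ℕ ↦ ∏ k ∈ range (n + 1), (c + k) * (d + k) / ((a + k) * (b + k))) atTop
      (𝓝 (Gamma a * Gamma b / (Gamma c * Gamma d))) := by
  have hlim := ((GammaSeq_tendsto_Gamma a).mul (GammaSeq_tendsto_Gamma b)).div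
    ((GammaSeq_tendsto_Gamma c).mul (GammaSeq_tendsto_Gamma d))
    (mul_ne_zero (Gamma_ne_zero hc) (Gamma_ne_zero hd))
  refine hlim.congr' ?_
  filter_upwards [eventually_ne_atTop 0] with n hn
  exact GammaSeq_mul_div_GammaSeq_mul habcd hn

end Complex

lemma sub_div_add_natCast {N : ℂ} (hN : N ≠ 0) (s z : ℂ) (k : ℕ) :
    (s - z) / N + k = (s + k * N - z) / N := by
  field_simp
  ring

lemma sub_div_ne_neg_natCast {N s z : ℂ} (hN : N ≠ 0) (h : ∀ k : ℕ, s + k * N ≠ z) (m : ℕ) :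
    (s - z) / N ≠ -m := by
  intro he
  have := sub_div_add_natCast hN s z m
  rw [he, neg_add_cancel, eq_comm, div_eq_zero_iff, sub_eq_zero] at this
  exact h m (this.resolve_right hN)

/-- `∏_{k=0}^∞ Z(s+kN)` converges to
`Γ((s-1)/N)Γ((s-4)/N)/(Γ((s-2)/N)Γ((s-3)/N))`. -/
theorem stmt_8 (N : ℕ) (hN : 0 < N) (s : ℂ)
    (hs : ∀ k : ℕ, s + k * N ≠ 1 ∧ s + k * N ≠ 2 ∧ s + k * N ≠ 3 ∧ s + k * N ≠ 4) :
    Tendsto (fun K : ℕ => ∏ k ∈ Finset.range (K + 1),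
        ((s + k * N - 2) * (s + k * N - 3) / ((s + k * N - 1) * (s + k * N - 4))))
      atTop
      (nhds (Complex.Gamma ((s - 1) / N) * Complex.Gamma ((s - 4) / N) /
        (Complex.Gamma ((s - 2) / N) * Complex.Gamma ((s - 3) / N)))) := by
  have hN' : (N : ℂ) ≠ 0 := Nat.cast_ne_zero.mpr hN.ne'
  have hfactor : ∀ k : ℕ,
      (s + k * N - 2) * (s + k * N - 3) / ((s + k * N - 1) * (s + k * N - 4)) =
        ((s - 2) / N + k) * ((s - 3) / N + k) / (((s - 1) / N + k) * ((s - 4) / N + k)) := by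
    intro k
    simp only [sub_div_add_natCast hN', div_mul_div_comm]
    exact (div_div_div_cancel_right₀ (mul_ne_zero hN' hN') _ _).symm
  simp only [hfactor]
  exact tendsto_prod_div_Gamma (by ring) (sub_div_ne_neg_natCast hN' fun k ↦ (hs k).2.1)
    (sub_div_ne_neg_natCast hN' fun k ↦ (hs k).2.2.1)
end

section
/- For a positive integer N, the function Γ((s-1)/N)Γ((s-4)/N)/(Γ((s-2)/N)Γ((s-3)/N)) of the complex variable s is a rational function if and only if N = 1 or N = 2. -/
/-!
For `N ≥ 3`, pick `m` with `q(1 - mN) ≠ 0` and write the identity as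
`q = p · Γ((s-2)/N) Γ((s-3)/N) · Γ((s-1)/N)⁻¹ Γ((s-4)/N)⁻¹`. At `s₀ = 1 - mN` the arguments
`(s₀-2)/N = -m - 1/N` and `(s₀-3)/N = -m - 2/N` are not poles of `Γ`, and `1/Γ` is entire, so the
right-hand side is continuous at `s₀`; but it vanishes there because `(s₀-1)/N = -m` is a pole.
Letting `s → s₀` off the real axis, which contains all the poles, gives `q(s₀) = 0`, a
contradiction. For `N = 1, 2` the functional equation `Γ(z+1) = z Γ(z)` collapses the quotient
to `(s-2)/(s-4)` and `(s-3)/(s-4)`.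
-/

open Complex Filter Topology Polynomial

theorem Polynomial.exists_eval_ne_zero_of_injective {R α : Type*} [CommRing R] [IsDomain R]
    [Infinite α] {q : R[X]} (hq : q ≠ 0) {f : α → R} (hf : f.Injective) :
    ∃ a, q.eval (f a) ≠ 0 := by
  by_contra! h
  refine hq (q.eq_zero_of_infinite_isRoot ((Set.infinite_range_of_injective hf).mono ?_))
  rintro _ ⟨a, rfl⟩
  exact h a

theorem Complex.dense_setOf_im_ne_zero : Dense {s : ℂ | s.im ≠ 0} := by
  have h := interior_preimage_im {(0 : ℝ)}
  rw [interior_singleton, Set.preimage_empty] at h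
  exact interior_eq_empty_iff_dense_compl.mp h

theorem Complex.sub_div_natCast_ne_neg_natCast {s c : ℂ} (hs : s.im ≠ 0) (hc : c.im = 0)
    {N : ℕ} (hN : N ≠ 0) (k : ℕ) : (s - c) / N ≠ -k :=
  ne_of_apply_ne im (by simp [hs, hc, hN])

theorem Complex.Gamma_add_one_mul_div_Gamma_mul {z w : ℂ} (hz : ∀ m : ℕ, z ≠ -m)
    (hw : ∀ m : ℕ, w ≠ -m) : Gamma (z + 1) * Gamma w / (Gamma z * Gamma (w + 1)) = z / w := by
  have hz0 : z ≠ 0 := by simpa using hz 0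
  have hw0 : w ≠ 0 := by simpa using hw 0
  rw [Gamma_add_one z hz0, Gamma_add_one w hw0]
  field_simp [Gamma_ne_zero hz, Gamma_ne_zero hw]

theorem neg_natCast_sub_div_ne_neg_natCast {N j : ℕ} (hj : 0 < j) (hjN : j < N) (m k : ℕ) :
    -(m : ℂ) - j / N ≠ -k := by
  intro h
  have hN : (N : ℂ) ≠ 0 := by exact_mod_cast (hj.trans hjN).ne'
  have hC : (j : ℂ) = ((k : ℤ) - m) * N := by
    field_simp at h
    push_cast
    linear_combination -h
  have hZ : (j : ℤ) = ((k : ℤ) - m) * N := by exact_mod_cast hC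
  have : N ∣ j := Int.natCast_dvd_natCast.mp ⟨(k : ℤ) - m, by rw [hZ, mul_comm]⟩
  exact absurd (Nat.le_of_dvd hj this) (by omega)

noncomputable def gammaRatioInv (N : ℕ) (s : ℂ) : ℂ :=
  Gamma ((s - 2) / N) * Gamma ((s - 3) / N) / (Gamma ((s - 1) / N) * Gamma ((s - 4) / N))

theorem gammaRatioInv_one_sub_mul {N : ℕ} (hN : N ≠ 0) (m : ℕ) :
    gammaRatioInv N (1 - m * N) = 0 := by
  have : ((1 - m * N : ℂ) - 1) / N = -m := by field_simp; ring
  rw [gammaRatioInv, this, Gamma_neg_nat_eq_zero, zero_mul, div_zero]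

theorem continuousAt_gammaRatioInv {N : ℕ} (hN : 3 ≤ N) (m : ℕ) :
    ContinuousAt (gammaRatioInv N) (1 - m * N) := by
  have hN0 : (N : ℂ) ≠ 0 := by exact_mod_cast (show N ≠ 0 by omega)
  have hΓ (j : ℕ) (hj : 0 < j) (hjN : j < N) :
      ContinuousAt (fun s ↦ Gamma ((s - (1 + j)) / N)) (1 - m * N) := by
    refine (differentiableAt_Gamma _ fun k ↦ ?_).continuousAt.comp (by fun_prop)
    rw [show ((1 - m * N : ℂ) - (1 + j)) / N = -m - j / N by field_simp; ring]
    exact neg_natCast_sub_div_ne_neg_natCast hj hjN m k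
  have hinv (c : ℂ) : Continuous fun s ↦ (Gamma ((s - c) / N))⁻¹ :=
    differentiable_one_div_Gamma.continuous.comp (by fun_prop)
  have h2 := hΓ 1 one_pos (by omega)
  have h3 := hΓ 2 two_pos (by omega)
  norm_num at h2 h3
  convert (h2.mul h3).mul ((hinv 1).mul (hinv 4)).continuousAt using 1
  funext s
  simp only [gammaRatioInv, div_eq_mul_inv, mul_inv, Pi.mul_apply]

theorem not_exists_rational_of_three_le {N : ℕ} (hN : 3 ≤ N) :
    ¬ ∃ p q : ℂ[X], q ≠ 0 ∧ ∀ s : ℂ,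
      (∀ m : ℕ, (s - 1) / N ≠ -(m : ℂ) ∧ (s - 2) / N ≠ -(m : ℂ) ∧
        (s - 3) / N ≠ -(m : ℂ) ∧ (s - 4) / N ≠ -(m : ℂ)) →
      q.eval s ≠ 0 →
      Gamma ((s - 1) / N) * Gamma ((s - 4) / N) / (Gamma ((s - 2) / N) * Gamma ((s - 3) / N))
        = p.eval s / q.eval s := by
  rintro ⟨p, q, hq, h⟩
  have hN0 : N ≠ 0 := by omega
  have hqG : ∀ s : ℂ, s.im ≠ 0 → q.eval s ≠ 0 → q.eval s = p.eval s * gammaRatioInv N s := by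
    intro s hs hqs
    have hpole (c : ℂ) (hc : c.im = 0) := sub_div_natCast_ne_neg_natCast hs hc hN0
    have hΓ (c : ℂ) (hc : c.im = 0) : Gamma ((s - c) / N) ≠ 0 := Gamma_ne_zero (hpole c hc)
    have := h s (fun k ↦ ⟨hpole 1 rfl k, hpole 2 rfl k, hpole 3 rfl k, hpole 4 rfl k⟩) hqs
    rw [div_eq_div_iff (mul_ne_zero (hΓ 2 rfl) (hΓ 3 rfl)) hqs] at this
    rw [gammaRatioInv, mul_div_assoc', eq_div_iff (mul_ne_zero (hΓ 1 rfl) (hΓ 4 rfl))]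
    linear_combination this
  obtain ⟨m, hqm⟩ := Polynomial.exists_eval_ne_zero_of_injective hq (f := fun m : ℕ ↦ 1 - m * N)
    fun a b hab ↦ by simpa [hN0] using hab
  have hfreq : ∃ᶠ s in 𝓝 (1 - m * N : ℂ), q.eval s = p.eval s * gammaRatioInv N s := by
    refine (mem_closure_iff_frequently.mp (dense_setOf_im_ne_zero _)).mp ?_
    filter_upwards [q.continuous.continuousAt.eventually_ne hqm] with s hqs hs
    exact hqG s hs hqs
  have hlim := tendsto_nhds_unique_of_frequently_eq q.continuous.continuousAt
    (p.continuous.continuousAt.mul (continuousAt_gammaRatioInv hN m)) hfreq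
  simp only [Pi.mul_apply, gammaRatioInv_one_sub_mul hN0, mul_zero] at hlim
  exact hqm hlim

/-- `Γ((s-1)/N)Γ((s-4)/N)/(Γ((s-2)/N)Γ((s-3)/N))` is a rational function
of `s` if and only if `N = 1` or `N = 2`. -/
theorem stmt_9 (N : ℕ) (hN : 0 < N) :
    (∃ p q : Polynomial ℂ, q ≠ 0 ∧ ∀ s : ℂ,
      (∀ m : ℕ, (s - 1) / N ≠ -(m : ℂ) ∧ (s - 2) / N ≠ -(m : ℂ) ∧
        (s - 3) / N ≠ -(m : ℂ) ∧ (s - 4) / N ≠ -(m : ℂ)) →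
      q.eval s ≠ 0 →
      Complex.Gamma ((s - 1) / N) * Complex.Gamma ((s - 4) / N) /
          (Complex.Gamma ((s - 2) / N) * Complex.Gamma ((s - 3) / N))
        = p.eval s / q.eval s)
    ↔ N = 1 ∨ N = 2 := by
  refine ⟨fun h ↦ ?_, ?_⟩
  · by_contra hN12
    exact not_exists_rational_of_three_le (by omega) h
  · rintro (rfl | rfl)
    · refine ⟨X - C 2, X - C 4, X_sub_C_ne_zero 4, fun s hs _ ↦ ?_⟩
      simp only [Nat.cast_one, div_one] at hs
      have := Gamma_add_one_mul_div_Gamma_mul (fun m ↦ (hs m).2.1) (fun m ↦ (hs m).2.2.2)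
      rw [show s - 2 + 1 = s - 1 by ring, show s - 4 + 1 = s - 3 by ring] at this
      simpa using this
    · refine ⟨X - C 3, X - C 4, X_sub_C_ne_zero 4, fun s hs _ ↦ ?_⟩
      simp only [Nat.cast_ofNat] at hs
      have := Gamma_add_one_mul_div_Gamma_mul (fun m ↦ (hs m).2.2.1) (fun m ↦ (hs m).2.2.2)
      rw [show (s - 3) / 2 + 1 = (s - 1) / 2 by ring, show (s - 4) / 2 + 1 = (s - 2) / 2 by ring,
        div_div_div_cancel_right₀ two_ne_zero, mul_comm (Gamma ((s - 3) / 2))] at this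
      simpa using this
end

section
/- For every integer r ≥ 2 and positive integer N, the infinite product ∏_{k=0}^∞ ∏_{ℓ=0}^r (s + kN - ℓ)^{(-1)^{r-ℓ+1} C(r,ℓ)} converges to ∏_{ℓ=0}^r Γ((s-ℓ)/N)^{(-1)^{r-ℓ} C(r,ℓ)} for complex s avoiding poles. -/
open Filter Finset Complex

/-!
Write `s + kN - ℓ = N (z_ℓ + k)` with `z_ℓ = (s - ℓ) / N` and put `d_ℓ = (-1)^(r-ℓ) C(r,ℓ)`.
Euler's approximants `GammaSeq z K = K^z K! / ∏_{k ≤ K} (z + k)` turn the `K`-th partial product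
into `∏_ℓ (N^(K+1) K!)^(-d_ℓ) · K^(-d_ℓ z_ℓ) · GammaSeq z_ℓ K ^ d_ℓ`. The weights `d_ℓ` form the
`r`-th forward difference, which kills polynomials of degree `< r`; as `r ≥ 2`, both `∑ d_ℓ` and
`∑ d_ℓ z_ℓ` vanish, so the divergent factors cancel and the product tends to `∏ Γ(z_ℓ)^d_ℓ`.
-/

theorem sum_range_neg_one_pow_choose_smul_affine_eq_zero {R : Type*} [CommRing R] {n : ℕ}
    (hn : 2 ≤ n) (a b : R) :
    ∑ k ∈ range (n + 1), ((-1 : ℤ) ^ (n - k) * n.choose k) • (a * k + b) = 0 := by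
  have hdeg := (Polynomial.natDegree_linear_le (a := a) (b := b)).trans_lt hn
  simpa [fwdDiff_iter_eq_sum_shift] using
    congr_fun (Polynomial.fwdDiff_iter_eq_zero_of_degree_lt hdeg) 0

theorem Complex.prod_cpow_eq_cpow_sum {ι : Type*} {x : ℂ} (hx : x ≠ 0) (s : Finset ι)
    (w : ι → ℂ) : ∏ i ∈ s, x ^ w i = x ^ ∑ i ∈ s, w i := by
  simp only [cpow_def_of_ne_zero hx, Finset.mul_sum, Complex.exp_sum]

theorem Complex.prod_range_add_natCast_eq_div_GammaSeq (z : ℂ) {n : ℕ} (hn : n ≠ 0) :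
    ∏ j ∈ range (n + 1), (z + j) = n ^ z * n.factorial / GammaSeq z n := by
  rw [GammaSeq, div_div_cancel₀]
  exact mul_ne_zero (by simp [cpow_eq_zero_iff, hn]) (mod_cast n.factorial_ne_zero)

section GammaQuotient

variable {ι : Type*} {s : Finset ι} {d : ι → ℤ} {z : ι → ℂ}

theorem Complex.prod_range_prod_mul_add_natCast_zpow_eq_prod_GammaSeq {A : ℂ} (hA : A ≠ 0)
    (hd : ∑ i ∈ s, (d i : ℂ) = 0) (hdz : ∑ i ∈ s, d i * z i = 0) {K : ℕ} (hK : K ≠ 0) :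
    ∏ k ∈ range (K + 1), ∏ i ∈ s, (A * (z i + k)) ^ (-d i) =
      ∏ i ∈ s, GammaSeq (z i) K ^ d i := by
  have hB : A ^ (K + 1) * (K.factorial : ℂ) ≠ 0 :=
    mul_ne_zero (pow_ne_zero _ hA) (mod_cast K.factorial_ne_zero)
  have hfactor : ∀ i ∈ s, ∏ k ∈ range (K + 1), (A * (z i + k)) ^ (-d i) =
      (A ^ (K + 1) * K.factorial) ^ ((-d i : ℤ) : ℂ) * (K : ℂ) ^ (((-d i : ℤ) : ℂ) * z i) *
        GammaSeq (z i) K ^ d i := by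
    intro i _
    rw [prod_zpow, prod_mul_distrib, prod_const, card_range,
      prod_range_add_natCast_eq_div_GammaSeq _ hK, cpow_intCast, cpow_int_mul]
    simp only [div_eq_mul_inv, mul_zpow, inv_zpow', neg_neg]
    ring
  rw [Finset.prod_comm, prod_congr rfl hfactor, prod_mul_distrib, prod_mul_distrib,
    prod_cpow_eq_cpow_sum hB, prod_cpow_eq_cpow_sum (mod_cast hK)]
  simp [hd, hdz]

theorem Complex.tendsto_prod_range_prod_mul_add_natCast_zpow {A : ℂ} (hA : A ≠ 0)
    (hd : ∑ i ∈ s, (d i : ℂ) = 0) (hdz : ∑ i ∈ s, d i * z i = 0)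
    (hz : ∀ i ∈ s, ∀ m : ℕ, z i ≠ -m) :
    Tendsto (fun K : ℕ ↦ ∏ k ∈ range (K + 1), ∏ i ∈ s, (A * (z i + k)) ^ (-d i)) atTop
      (nhds (∏ i ∈ s, Gamma (z i) ^ d i)) := by
  have hGammaSeq : Tendsto (fun K ↦ ∏ i ∈ s, GammaSeq (z i) K ^ d i) atTop
      (nhds (∏ i ∈ s, Gamma (z i) ^ d i)) :=
    tendsto_finsetProd _ fun i hi ↦
      ((continuousAt_zpow₀ _ _) (.inl (Gamma_ne_zero (hz i hi)))).tendsto.comp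
        (GammaSeq_tendsto_Gamma _)
  refine hGammaSeq.congr' ?_
  filter_upwards [eventually_ne_atTop 0] with K hK
  exact (prod_range_prod_mul_add_natCast_zpow_eq_prod_GammaSeq hA hd hdz hK).symm

end GammaQuotient

/-- for `r ≥ 2` and `N ≥ 1`, the infinite product
`∏_{k=0}^∞ ∏_{ℓ=0}^r (s + kN - ℓ)^{(-1)^{r-ℓ+1} C(r,ℓ)}` converges to
`∏_{ℓ=0}^r Γ((s-ℓ)/N)^{(-1)^{r-ℓ} C(r,ℓ)}`. -/
theorem stmt_16 (r : ℕ) (hr : 2 ≤ r) (N : ℕ) (hN : 0 < N) (s : ℂ)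
    (hs : ∀ k : ℕ, ∀ ℓ : ℕ, ℓ ≤ r → s + k * N - ℓ ≠ 0) :
    Tendsto (fun K : ℕ => ∏ k ∈ Finset.range (K + 1), ∏ ℓ ∈ Finset.range (r + 1),
        (s + k * N - ℓ) ^ ((-1 : ℤ) ^ (r - ℓ + 1) * (r.choose ℓ)))
      atTop
      (nhds (∏ ℓ ∈ Finset.range (r + 1),
        Complex.Gamma ((s - ℓ) / N) ^ ((-1 : ℤ) ^ (r - ℓ) * (r.choose ℓ)))) := by
  have hN' : (N : ℂ) ≠ 0 := mod_cast hN.ne'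
  set z : ℕ → ℂ := fun ℓ ↦ (s - ℓ) / N
  set d : ℕ → ℤ := fun ℓ ↦ (-1) ^ (r - ℓ) * r.choose ℓ
  have hd : ∑ ℓ ∈ range (r + 1), (d ℓ : ℂ) = 0 := by
    simpa [d] using sum_range_neg_one_pow_choose_smul_affine_eq_zero hr (0 : ℂ) 1
  have hdz : ∑ ℓ ∈ range (r + 1), (d ℓ : ℂ) * z ℓ = 0 := by
    rw [← sum_range_neg_one_pow_choose_smul_affine_eq_zero hr (-(N : ℂ)⁻¹) (s / N)]
    refine sum_congr rfl fun ℓ _ ↦ ?_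
    simp only [z, d, zsmul_eq_mul]
    push_cast
    ring
  have hz : ∀ ℓ ∈ range (r + 1), ∀ m : ℕ, z ℓ ≠ -m := by
    intro ℓ hℓ m h
    rw [div_eq_iff hN'] at h
    exact hs m ℓ (mem_range_succ_iff.mp hℓ) (by linear_combination h)
  refine (tendsto_prod_range_prod_mul_add_natCast_zpow hN' hd hdz hz).congr fun K ↦
    prod_congr rfl fun k _ ↦ prod_congr rfl fun ℓ _ ↦ ?_
  congr 1
  · simp only [z, mul_add, mul_div_cancel₀ _ hN']
    ring
  · simp only [d, pow_succ]
    ring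
end

section
/- For every integer r ≥ 1, the polynomial identity x(x-1)^{r-1} = (x-1)^r/(1 - x^{-1}) holds, and consequently ∏_{k=0}^∞ ζ_{G_m^r/F_1}(s+k) = ζ_{G_m^{r-1}/F_1}(s-1) for r ≥ 2, where ζ_{G_m^r/F_1}(s) = ∏_{ℓ=0}^r (s-ℓ)^{(-1)^{r-ℓ+1} C(r,ℓ)}. -/
/-!
Pascal's rule `C(r,ℓ) = C(r-1,ℓ-1) + C(r-1,ℓ)` on the exponents gives
`ζ_r(s) ζ_{r-1}(s) = ζ_{r-1}(s-1)`, so the partial products telescope to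
`ζ_{r-1}(s-1) / ζ_{r-1}(s+K)`. The exponents of `ζ_{r-1}` sum to `-(1-1)^{r-1} = 0` when `r ≥ 2`,
so `ζ_{r-1}(z) → 1` as `z → ∞`.
-/

open Filter Finset Complex Bornology Topology

theorem mul_sub_one_pow_eq_sub_one_pow_succ_div {K : Type*} [Field K] {x : K} (hx : x ≠ 0)
    (hx1 : x ≠ 1) (m : ℕ) : x * (x - 1) ^ m = (x - 1) ^ (m + 1) / (1 - x⁻¹) := by
  rw [eq_div_iff (sub_ne_zero.mpr fun h => hx1 (inv_eq_one.mp h.symm))]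
  field_simp
  ring

theorem Finset.prod_range_mul_eq_of_mul_succ_eq {M : Type*} [CommMonoid M] {f g : ℕ → M}
    (h : ∀ k, f k * g (k + 1) = g k) (n : ℕ) : (∏ k ∈ range n, f k) * g n = g 0 := by
  induction n with
  | zero => simp
  | succ n ih => rw [prod_range_succ, mul_assoc, h, ih]

theorem prod_zpow_eq_zpow_sum₀ {ι G : Type*} [CommGroupWithZero G] {a : G} (ha : a ≠ 0)
    (t : Finset ι) (e : ι → ℤ) : ∏ i ∈ t, a ^ e i = a ^ ∑ i ∈ t, e i := by
  classical
  induction t using Finset.induction_on with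
  | empty => simp
  | insert i t hi ih => rw [prod_insert hi, sum_insert hi, ih, zpow_add₀ ha]

theorem tendsto_prod_sub_zpow_cobounded {ι : Type*} (t : Finset ι) (a : ι → ℂ) (e : ι → ℤ)
    (he : ∑ i ∈ t, e i = 0) :
    Tendsto (fun z : ℂ => ∏ i ∈ t, (z - a i) ^ e i) (cobounded ℂ) (𝓝 1) := by
  have hF : Tendsto (fun w : ℂ => ∏ i ∈ t, (1 - a i * w) ^ e i) (𝓝 0) (𝓝 1) := by
    rw [← prod_const_one (s := t)]
    refine tendsto_finsetProd t fun i _ => ?_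
    have h1 : Tendsto (fun w : ℂ => 1 - a i * w) (𝓝 0) (𝓝 1) :=
      (by fun_prop : Continuous fun w : ℂ => 1 - a i * w).tendsto' 0 1 (by simp)
    simpa using h1.zpow₀ (e i) (Or.inl one_ne_zero)
  refine (hF.comp tendsto_inv₀_cobounded).congr' ?_
  filter_upwards [eventually_ne_cobounded 0] with z hz0
  -- `z - aᵢ = z (1 - aᵢ z⁻¹)`, and the powers of `z` cancel because `∑ eᵢ = 0`.
  have hfac : ∀ i ∈ t, (z - a i) ^ e i = z ^ e i * (1 - a i * z⁻¹) ^ e i := fun i _ => by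
    rw [← mul_zpow, mul_sub, mul_one, mul_left_comm, mul_inv_cancel₀ hz0, mul_one]
  simp [prod_congr rfl hfac, prod_mul_distrib, prod_zpow_eq_zpow_sum₀ hz0, he]

def gmExponent (r ℓ : ℕ) : ℤ := (-1) ^ (r - ℓ + 1) * r.choose ℓ

/-- `ζ_{G_m^r/F_1}(s)`. -/
noncomputable def absZetaGm (r : ℕ) (s : ℂ) : ℂ :=
  ∏ ℓ ∈ range (r + 1), (s - ℓ) ^ gmExponent r ℓ

theorem gmExponent_of_lt {r ℓ : ℕ} (h : r < ℓ) : gmExponent r ℓ = 0 := by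
  simp [gmExponent, Nat.choose_eq_zero_of_lt h]

theorem gmExponent_succ_zero (m : ℕ) : gmExponent (m + 1) 0 = -gmExponent m 0 := by
  simp [gmExponent, pow_succ]

theorem gmExponent_succ_succ (m ℓ : ℕ) :
    gmExponent (m + 1) (ℓ + 1) = gmExponent m ℓ - gmExponent m (ℓ + 1) := by
  rcases lt_or_ge m ℓ with h | h
  · simp [gmExponent_of_lt, h, Nat.lt_succ_of_lt h]
  obtain ⟨d, rfl⟩ := Nat.exists_eq_add_of_le h
  cases d with
  | zero => simp [gmExponent, Nat.choose_succ_self, pow_succ]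
  | succ d =>
    simp only [gmExponent, Nat.choose_succ_succ', Nat.cast_add]
    rw [show ℓ + (d + 1) + 1 - (ℓ + 1) + 1 = d + 2 by omega,
      show ℓ + (d + 1) - ℓ + 1 = d + 2 by omega,
      show ℓ + (d + 1) - (ℓ + 1) + 1 = d + 1 by omega, pow_succ _ (d + 1)]
    ring

theorem sum_gmExponent {r : ℕ} (hr : r ≠ 0) : ∑ ℓ ∈ range (r + 1), gmExponent r ℓ = 0 := by
  have hbinom := add_pow (1 : ℤ) (-1) r
  simp only [one_pow, one_mul, add_neg_cancel, zero_pow hr] at hbinom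
  calc ∑ ℓ ∈ range (r + 1), gmExponent r ℓ
      = -∑ ℓ ∈ range (r + 1), (-1) ^ (r - ℓ) * (r.choose ℓ : ℤ) := by
        rw [← sum_neg_distrib]
        exact sum_congr rfl fun ℓ _ => by simp [gmExponent, pow_succ]
    _ = 0 := by rw [← hbinom, neg_zero]

theorem absZetaGm_eq_prod_range {r n : ℕ} (h : r + 1 ≤ n) (s : ℂ) :
    absZetaGm r s = ∏ ℓ ∈ range n, (s - ℓ) ^ gmExponent r ℓ :=
  prod_subset (range_subset_range.mpr h) fun ℓ _ hℓ => by
    rw [gmExponent_of_lt (by simp at hℓ; omega), zpow_zero]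

theorem absZetaGm_succ_mul {m : ℕ} {s : ℂ} (hs : ∀ ℓ : ℕ, ℓ ≤ m + 1 → s - ℓ ≠ 0) :
    absZetaGm (m + 1) s * absZetaGm m s = absZetaGm m (s - 1) := by
  have hterm : ∀ ℓ ∈ range (m + 1),
      (s - (ℓ + 1 : ℕ)) ^ gmExponent (m + 1) (ℓ + 1) * (s - (ℓ + 1 : ℕ)) ^ gmExponent m (ℓ + 1)
        = (s - 1 - ℓ) ^ gmExponent m ℓ := fun ℓ hℓ => by
    rw [← zpow_add₀ (hs _ (by simp at hℓ; omega)), gmExponent_succ_succ, sub_add_cancel]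
    push_cast
    ring_nf
  have hzero : (s - (0 : ℕ)) ^ gmExponent (m + 1) 0 * (s - (0 : ℕ)) ^ gmExponent m 0 = 1 := by
    rw [← zpow_add₀ (hs 0 (by omega)), gmExponent_succ_zero, neg_add_cancel, zpow_zero]
  rw [absZetaGm, absZetaGm_eq_prod_range (Nat.le_succ (m + 1)), ← prod_mul_distrib,
    prod_range_succ', prod_congr rfl hterm, hzero, mul_one, absZetaGm]

theorem prod_absZetaGm_succ_mul {m : ℕ} {s : ℂ}
    (hs : ∀ k : ℕ, ∀ ℓ : ℕ, ℓ ≤ m + 1 → s + k - ℓ ≠ 0) (n : ℕ) :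
    (∏ k ∈ range n, absZetaGm (m + 1) (s + k)) * absZetaGm m (s + n - 1) = absZetaGm m (s - 1) := by
  refine (prod_range_mul_eq_of_mul_succ_eq (g := fun k : ℕ => absZetaGm m (s + k - 1))
    (fun k => ?_) n).trans (by simp)
  rw [show s + ((k + 1 : ℕ) : ℂ) - 1 = s + k by push_cast; ring]
  exact absZetaGm_succ_mul (hs k)

theorem tendsto_absZetaGm_cobounded {r : ℕ} (hr : r ≠ 0) :
    Tendsto (absZetaGm r) (cobounded ℂ) (𝓝 1) :=
  tendsto_prod_sub_zpow_cobounded _ _ _ (sum_gmExponent hr)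

/-- for `r ≥ 1`, `x(x-1)^{r-1} = (x-1)^r/(1 - x⁻¹)`, and consequently,
for `r ≥ 2`, `∏_{k=0}^∞ ζ_{G_m^r/F_1}(s+k) = ζ_{G_m^{r-1}/F_1}(s-1)` where
`ζ_{G_m^r/F_1}(s) = ∏_{ℓ=0}^r (s-ℓ)^{(-1)^{r-ℓ+1} C(r,ℓ)}`. -/
theorem stmt_17 (r : ℕ) (hr : 1 ≤ r) :
    (∀ x : ℂ, x ≠ 0 → x ≠ 1 → x * (x - 1) ^ (r - 1) = (x - 1) ^ r / (1 - x⁻¹))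
    ∧ (2 ≤ r → ∀ s : ℂ, (∀ k : ℕ, ∀ ℓ : ℕ, ℓ ≤ r → s + k - ℓ ≠ 0) →
      Tendsto (fun K : ℕ => ∏ k ∈ Finset.range (K + 1), ∏ ℓ ∈ Finset.range (r + 1),
          (s + k - ℓ) ^ ((-1 : ℤ) ^ (r - ℓ + 1) * (r.choose ℓ)))
        atTop
        (nhds (∏ ℓ ∈ Finset.range ((r - 1) + 1),
          ((s - 1) - ℓ) ^ ((-1 : ℤ) ^ ((r - 1) - ℓ + 1) * ((r - 1).choose ℓ))))) := by
  obtain ⟨m, rfl⟩ : ∃ m, r = m + 1 := ⟨r - 1, by omega⟩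
  refine ⟨fun x hx hx1 => mul_sub_one_pow_eq_sub_one_pow_succ_div hx hx1 m, fun hr2 s hs => ?_⟩
  change Tendsto (fun K : ℕ => ∏ k ∈ range (K + 1), absZetaGm (m + 1) (s + k)) atTop
    (𝓝 (absZetaGm m (s - 1)))
  have hlim : Tendsto (fun K : ℕ => absZetaGm m (s + (K + 1 : ℕ) - 1)) atTop (𝓝 1) :=
    (tendsto_absZetaGm_cobounded (by omega)).comp <| (tendsto_sub_const_cobounded 1).comp <|
      (tendsto_const_add_cobounded s).comp <|
        tendsto_natCast_atTop_cobounded.comp (tendsto_add_atTop_nat 1)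
  refine (div_one (absZetaGm m (s - 1)) ▸ tendsto_const_nhds.div hlim one_ne_zero).congr' ?_
  filter_upwards [hlim.eventually_ne one_ne_zero] with K hK
  rw [Pi.div_apply, div_eq_iff hK, prod_absZetaGm_succ_mul hs]
end

section
/- The infinite product ∏_{n=1}^∞ ζ_{GL(3)/F_1}(s+n) converges to ζ_{SL(3)/F_1}(s), where ζ_{GL(3)/F_1}(s) = (s-8)(s-7)(s-3)/((s-9)(s-5)(s-4)) and ζ_{SL(3)/F_1}(s) = (s-6)(s-5)/((s-8)(s-3)), for complex s avoiding all poles and zeros of the factors. -/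
/-!
Telescoping: `ζ_{GL(3)}(s + n + 1) = ζ_{SL(3)}(s + n) / ζ_{SL(3)}(s + n + 1)`, so the `K`-th partial
product equals `ζ_{SL(3)}(s) / ζ_{SL(3)}(s + K)`, and `ζ_{SL(3)}(s + K) → 1` since it is a
quotient of monic polynomials of the same degree.
-/

open Filter Finset Topology

theorem prod_range_div_succ_of_ne_zero {G₀ : Type*} [CommGroupWithZero G₀] {g : ℕ → G₀}
    (hg : ∀ n, g n ≠ 0) (K : ℕ) : ∏ n ∈ range K, g n / g (n + 1) = g 0 / g K := by
  simpa using congr_arg Units.val (prod_range_div' (fun n => Units.mk0 (g n) (hg n)) K)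

theorem tendsto_prod_range_div_succ {𝕜 : Type*} [Field 𝕜] [TopologicalSpace 𝕜]
    [ContinuousMul 𝕜] [ContinuousInv₀ 𝕜] {g : ℕ → 𝕜} (hg : ∀ n, g n ≠ 0)
    (hlim : Tendsto g atTop (𝓝 1)) :
    Tendsto (fun K => ∏ n ∈ range K, g n / g (n + 1)) atTop (𝓝 (g 0)) := by
  simp_rw [prod_range_div_succ_of_ne_zero hg]
  have h : Tendsto (fun K => g 0 / g K) atTop (𝓝 (g 0 / 1)) :=
    tendsto_const_nhds.div hlim one_ne_zero
  rwa [div_one] at h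

theorem tendsto_natCast_add_div_natCast_add (a b : ℂ) :
    Tendsto (fun n : ℕ => (n + a) / (n + b)) atTop (𝓝 1) := by
  simpa [add_comm] using tendsto_add_mul_div_add_mul_atTop_nhds a b 1 one_ne_zero

noncomputable def zetaGL3 (s : ℂ) : ℂ := (s - 8) * (s - 7) * (s - 3) / ((s - 9) * (s - 5) * (s - 4))

noncomputable def zetaSL3 (s : ℂ) : ℂ := (s - 6) * (s - 5) / ((s - 8) * (s - 3))

theorem zetaGL3_add_one {s : ℂ} (hs : s ≠ 5) :
    zetaGL3 (s + 1) = zetaSL3 s / zetaSL3 (s + 1) := by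
  rw [zetaGL3, zetaSL3, zetaSL3, div_div_div_eq,
    show (s - 6) * (s - 5) * ((s + 1 - 8) * (s + 1 - 3)) =
      (s - 5) * ((s - 6) * (s - 7) * (s - 2)) by ring,
    show (s - 8) * (s - 3) * ((s + 1 - 6) * (s + 1 - 5)) =
      (s - 5) * ((s - 8) * (s - 3) * (s - 4)) by ring,
    mul_div_mul_left _ _ (sub_ne_zero.mpr hs)]
  ring_nf

theorem zetaSL3_ne_zero {s : ℂ} (h3 : s ≠ 3) (h5 : s ≠ 5) (h6 : s ≠ 6) (h8 : s ≠ 8) :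
    zetaSL3 s ≠ 0 := by
  simp only [zetaSL3, ne_eq, div_eq_zero_iff, mul_eq_zero, sub_eq_zero]
  tauto

theorem tendsto_zetaSL3_add_natCast (s : ℂ) :
    Tendsto (fun n : ℕ => zetaSL3 (s + n)) atTop (𝓝 1) := by
  have h := (tendsto_natCast_add_div_natCast_add (s - 6) (s - 8)).mul
    (tendsto_natCast_add_div_natCast_add (s - 5) (s - 3))
  rw [mul_one] at h
  refine h.congr fun n => ?_
  rw [zetaSL3, div_mul_div_comm]
  ring_nf

/-- `∏_{n=1}^∞ ζ_{GL(3)/F_1}(s+n)` converges to `ζ_{SL(3)/F_1}(s)`,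
where `ζ_{GL(3)/F_1}(s) = (s-8)(s-7)(s-3)/((s-9)(s-5)(s-4))` and
`ζ_{SL(3)/F_1}(s) = (s-6)(s-5)/((s-8)(s-3))`. -/
theorem stmt_19 (s : ℂ)
    (hs : ∀ n : ℕ, s + n ≠ 3 ∧ s + n ≠ 4 ∧ s + n ≠ 5 ∧
      s + n ≠ 7 ∧ s + n ≠ 8 ∧ s + n ≠ 9) :
    Tendsto (fun K : ℕ => ∏ n ∈ Finset.range K,
        ((s + (n + 1) - 8) * (s + (n + 1) - 7) * (s + (n + 1) - 3) /
          ((s + (n + 1) - 9) * (s + (n + 1) - 5) * (s + (n + 1) - 4))))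
      atTop (nhds ((s - 6) * (s - 5) / ((s - 8) * (s - 3)))) := by
  have hSL : ∀ n : ℕ, zetaSL3 (s + n) ≠ 0 := fun n => by
    obtain ⟨h3, -, h5, -, h8, -⟩ := hs n
    obtain ⟨-, -, -, h7, -, -⟩ := hs (n + 1)
    exact zetaSL3_ne_zero h3 h5 (fun h6 => h7 (by push_cast; linear_combination h6)) h8
  have hGL : ∀ n : ℕ, zetaGL3 (s + (n + 1)) = zetaSL3 (s + n) / zetaSL3 (s + ↑(n + 1)) :=
    fun n => by
      rw [← add_assoc, zetaGL3_add_one (hs n).2.2.1]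
      push_cast
      ring_nf
  have h := tendsto_prod_range_div_succ hSL (tendsto_zetaSL3_add_natCast s)
  simp only [← hGL, Nat.cast_zero, add_zero] at h
  exact h
end
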